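/- Let $T_{\alpha,w,\infty}$ be a weighted composition operator on $L^\infty(\Omega,\mu)$ and $F\subseteq\Omega$ Borel with $0<\mu(F)<\infty$, such that $\inf\{\prod_{k=1}^n(w\circ\alpha^{-k})(t): n\in\mathbb{N}, t\in F\}>0$. Then $\{f\in L^\infty(\Omega,\mu): \|T_{\alpha,w,\infty}^n f\|_\infty\geq 1 \text{ for all } n\}$ is not $\sigma$-porous; in particular the set of non-hypercyclic vectors of $T_{\alpha,w,\infty}$ is not $\sigma$-porous. -/

import Mathlib

open MeasureTheory Metric Set ENNReal

/-- `E` is `lam`-porous at `x`: for every `δ > 0` there is `y ∈ B(x;δ) \ {x}` with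
`B(y; lam * d(x,y)) ∩ E = ∅`. -/
def PorousAt {X : Type*} [PseudoMetricSpace X] (lam : ℝ) (E : Set X) (x : X) : Prop :=
  ∀ δ > 0, ∃ y ∈ Metric.ball x δ, y ≠ x ∧ Metric.ball y (lam * dist x y) ∩ E = ∅

/-- `E` is `lam`-porous if it is `lam`-porous at each of its points. -/
def Porous {X : Type*} [PseudoMetricSpace X] (lam : ℝ) (E : Set X) : Prop :=
  ∀ x ∈ E, PorousAt lam E x

/-- `E` is `σ`-`lam`-porous if it is a countable union of `lam`-porous sets. -/
def SigmaPorousFor {X : Type*} [PseudoMetricSpace X] (lam : ℝ) (E : Set X) : Prop :=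
  ∃ S : ℕ → Set X, (∀ n, Porous lam (S n)) ∧ E = ⋃ n, S n

/-- `E` is `σ`-porous if it is a countable union of sets, each `lam`-porous for
some `0 < lam < 1`. -/
def SigmaPorous {X : Type*} [PseudoMetricSpace X] (E : Set X) : Prop :=
  ∃ S : ℕ → Set X, (∀ n, ∃ lam : ℝ, 0 < lam ∧ lam < 1 ∧ Porous lam (S n)) ∧ E = ⋃ n, S n

/-- The `n`-th power of the weighted composition operator `T_{α,w} f = w · (f ∘ α)`, computed
pointwise: `(T^n f)(x) = (∏_{k=0}^{n-1} w(α^k x)) f(α^n x)`. -/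
noncomputable def TinfPow {Ω : Type*} (α : Ω ≃ Ω) (w : Ω → ℝ) (n : ℕ) (f : Ω → ℂ) :
    Ω → ℂ :=
  fun x => (∏ k ∈ Finset.range n, (w ((⇑α)^[k] x) : ℂ)) * f ((⇑α)^[n] x)

/-- A `lam`-porous set (with `lam > 0`) is nowhere dense. -/
lemma porous_isNowhereDense {X : Type*} [MetricSpace X] {lam : ℝ} (hlam : 0 < lam)
    {E : Set X} (hE : Porous lam E) : IsNowhereDense E := by
  rw [IsNowhereDense, eq_empty_iff_forall_notMem]
  intro x hx
  obtain ⟨r, hr, hball⟩ := Metric.mem_nhds_iff.1 (mem_interior_iff_mem_nhds.1 hx)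
  have hxcl : x ∈ closure E := interior_subset hx
  obtain ⟨e, heE, hex⟩ := Metric.mem_closure_iff.1 hxcl r hr
  have hδ : (0:ℝ) < r - dist x e := by linarith
  obtain ⟨y, hy, hyne, hyball⟩ := hE e heE (r - dist x e) hδ
  have hycl : y ∈ closure E := by
    apply hball
    rw [Metric.mem_ball] at hy ⊢
    calc dist y x ≤ dist y e + dist e x := dist_triangle _ _ _
    _ < (r - dist x e) + dist x e := by rw [dist_comm e x]; linarith
    _ = r := by ring
  have hd : 0 < dist e y := dist_pos.2 fun h => hyne h.symm
  obtain ⟨b, hbE, hby⟩ := Metric.mem_closure_iff.1 hycl (lam * dist e y) (by positivity)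
  have : b ∈ Metric.ball y (lam * dist e y) ∩ E :=
    ⟨Metric.mem_ball.2 (by rwa [dist_comm]), hbE⟩
  rw [hyball] at this
  exact this

/-- A `σ`-porous set is meagre. -/
lemma sigmaPorous_isMeagre {X : Type*} [MetricSpace X] {E : Set X}
    (h : SigmaPorous E) : IsMeagre E := by
  obtain ⟨S, hS, rfl⟩ := h
  refine isMeagre_iUnion fun n => ?_
  obtain ⟨lam, h0, _, hp⟩ := hS n
  rw [isMeagre_iff_countable_union_isNowhereDense]
  exact ⟨{S n}, by simpa using porous_isNowhereDense h0 hp, countable_singleton _, by simp⟩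

section aux
variable {Ω : Type*} [MeasurableSpace Ω] {μ : Measure Ω}

lemma indicator_eLpNorm_zero_iff (M : Set Ω) :
    eLpNorm (M.indicator (fun _ => (1:ℂ))) ⊤ μ = 0 ↔ μ M = 0 := by
  rw [eLpNorm_exponent_top, eLpNormEssSup_eq_zero_iff]
  have hset : {x | ¬ M.indicator (fun _ => (1:ℂ)) x = 0} = M := by
    ext x; by_cases hx : x ∈ M <;> simp [hx]
  constructor
  · intro h
    have := h
    rw [Filter.EventuallyEq, ae_iff] at this
    simpa [hset] using this
  · intro h
    rw [Filter.EventuallyEq, ae_iff]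
    simpa [hset] using h

lemma null_pres_step (α : Ω ≃ Ω)
    (hnorm : ∀ f : Ω → ℂ, eLpNorm (f ∘ ⇑α) ⊤ μ = eLpNorm f ⊤ μ ∧
      eLpNorm (f ∘ ⇑α.symm) ⊤ μ = eLpNorm f ⊤ μ)
    {N : Set Ω} (hN : μ N = 0) : μ ((⇑α.symm) ⁻¹' N) = 0 := by
  rw [← indicator_eLpNorm_zero_iff] at hN ⊢
  have hcomp : ((⇑α.symm) ⁻¹' N).indicator (fun _ => (1:ℂ)) =
      (N.indicator (fun _ => (1:ℂ))) ∘ ⇑α.symm := by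
    ext x; by_cases hx : α.symm x ∈ N <;> simp [hx, Set.indicator_apply]
  rw [hcomp, (hnorm _).2, hN]

lemma null_pres_iter (α : Ω ≃ Ω)
    (hnorm : ∀ f : Ω → ℂ, eLpNorm (f ∘ ⇑α) ⊤ μ = eLpNorm f ⊤ μ ∧
      eLpNorm (f ∘ ⇑α.symm) ⊤ μ = eLpNorm f ⊤ μ)
    (n : ℕ) {N : Set Ω} (hN : μ N = 0) : μ ((⇑α.symm)^[n] ⁻¹' N) = 0 := by
  induction n with
  | zero => simpa using hN
  | succ k ih =>
      have : (⇑α.symm)^[k+1] ⁻¹' N = (⇑α.symm) ⁻¹' ((⇑α.symm)^[k] ⁻¹' N) := by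
        rw [Function.iterate_succ]; rfl
      rw [this]
      exact null_pres_step α hnorm ih

omit [MeasurableSpace Ω] in
lemma iter_cancel (α : Ω ≃ Ω) (k m : ℕ) (t : Ω) :
    (⇑α)^[k] ((⇑α.symm)^[k+m] t) = (⇑α.symm)^[m] t := by
  induction k with
  | zero => simp
  | succ k ih =>
      rw [Function.iterate_succ_apply]
      have h1 : (⇑α.symm)^[k+1+m] t = α.symm ((⇑α.symm)^[k+m] t) := by
        rw [show k+1+m = (k+m)+1 by ring, Function.iterate_succ_apply']
      rw [h1, Equiv.apply_symm_apply]
      exact ih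

end aux

/-- If `inf {∏_{k=1}^n w(α^{-k} t) : n ∈ ℕ, t ∈ F} > 0` for a Borel set `F` with
`0 < μ(F) < ∞`, then `{f ∈ L^∞ : ‖T^n f‖_∞ ≥ 1 for all n}` is not `σ`-porous; in particular
the set of non-hypercyclic vectors of `T_{α,w,∞}` is not `σ`-porous. -/
theorem stmt_17 {Ω : Type*} [TopologicalSpace Ω] [T2Space Ω] [LocallyCompactSpace Ω]
    [MeasurableSpace Ω] [BorelSpace Ω] (μ : Measure Ω) [μ.Regular]
    (w : Ω → ℝ) (hw0 : ∀ x, 0 < w x) (hwm : Measurable w) (hwb : ∃ C, ∀ x, w x ≤ C)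
    (α : Ω ≃ Ω) (hα : Measurable α) (hα' : Measurable α.symm)
    (hnorm : ∀ f : Ω → ℂ, eLpNorm (f ∘ ⇑α) ⊤ μ = eLpNorm f ⊤ μ ∧
      eLpNorm (f ∘ ⇑α.symm) ⊤ μ = eLpNorm f ⊤ μ)
    (F : Set Ω) (hFm : MeasurableSet F) (hF0 : 0 < μ F) (hFfin : μ F < ⊤)
    (hβ : ∃ β > (0 : ℝ), ∀ n : ℕ, ∀ t ∈ F,
      β ≤ ∏ k ∈ Finset.Icc 1 n, w ((⇑α.symm)^[k] t)) :
    (¬ SigmaPorous {f : Lp ℂ ⊤ μ | ∀ n : ℕ,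
        1 ≤ eLpNorm (TinfPow α w n ⇑f) ⊤ μ}) ∧
    ¬ SigmaPorous {f : Lp ℂ ⊤ μ |
      ¬ Dense {g : Lp ℂ ⊤ μ | ∃ n : ℕ, ⇑g =ᵐ[μ] TinfPow α w n ⇑f}} := by
  haveI : Fact ((1:ℝ≥0∞) ≤ ⊤) := ⟨le_top⟩
  obtain ⟨β, hβ0, hβle⟩ := hβ
  set c : ℝ := 1/β + 1 with hc
  have hc1 : (1:ℝ)/β ≤ c - 1 := by simp [hc]
  set f₀ : Lp ℂ ⊤ μ := indicatorConstLp ⊤ hFm hFfin.ne ((c : ℝ) : ℂ) with hf₀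
  -- Main claim: the unit ball around `f₀` is contained in the first set.
  have hmain : ∀ f : Lp ℂ ⊤ μ, dist f f₀ < 1 → ∀ n : ℕ,
      1 ≤ eLpNorm (TinfPow α w n ⇑f) ⊤ μ := by
    intro f hdist n
    by_contra hlt
    push_neg at hlt
    -- a.e. bound on the difference
    have hdsn : eLpNorm (⇑f - ⇑f₀) ⊤ μ < 1 := by
      have h1 : eLpNorm (⇑f - ⇑f₀) ⊤ μ = eLpNorm (⇑(f - f₀)) ⊤ μ :=
        (eLpNorm_congr_ae (Lp.coeFn_sub f f₀)).symm
      have h2 : (eLpNorm (⇑(f - f₀)) ⊤ μ).toReal < 1 := by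
        rw [← Lp.norm_def, ← dist_eq_norm]; exact hdist
      rw [h1, ← ENNReal.ofReal_one]
      exact (ENNReal.lt_ofReal_iff_toReal_lt (Lp.eLpNorm_ne_top _)).2 h2
    have hgood : ∀ᵐ x ∂μ, x ∈ F → (1:ℝ)/β ≤ ‖⇑f x‖ := by
      have h3 := indicatorConstLp_coeFn (p := ⊤) (μ := μ) (hs := hFm)
        (hμs := hFfin.ne) (c := ((c : ℝ) : ℂ))
      have h2 := enorm_ae_le_eLpNormEssSup (⇑f - ⇑f₀) μ
      filter_upwards [h2, h3] with x h2x h3x hxF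
      have hlt1 : (‖(⇑f - ⇑f₀) x‖₊ : ℝ≥0∞) < 1 := by
        refine h2x.trans_lt ?_
        rwa [← eLpNorm_exponent_top]
      have hltR : ‖(⇑f - ⇑f₀) x‖ < 1 := by
        have h' : ‖(⇑f - ⇑f₀) x‖₊ < 1 := by exact_mod_cast hlt1
        rw [← coe_nnnorm]
        exact_mod_cast h'
      have hval : ⇑f₀ x = ((c:ℝ):ℂ) := by rw [h3x, Set.indicator_of_mem hxF]
      have hnc : ‖⇑f₀ x‖ = c := by
        rw [hval, Complex.norm_real, Real.norm_eq_abs, abs_of_pos (by positivity)]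
      have key : ‖⇑f₀ x‖ - ‖⇑f x‖ ≤ ‖(⇑f - ⇑f₀) x‖ := by
        rw [Pi.sub_apply, norm_sub_rev]
        exact norm_sub_norm_le _ _
      have e1 : c - ‖⇑f x‖ < 1 := by rw [← hnc]; linarith
      have e2 : (1:ℝ)/β ≤ c - 1 := hc1
      calc (1:ℝ)/β ≤ c - 1 := e2
      _ ≤ ‖⇑f x‖ := by linarith [e1]
    -- a.e. bound on the image, pulled back to `F`
    have hae : ∀ᵐ x ∂μ, (‖TinfPow α w n ⇑f x‖₊ : ℝ≥0∞) < 1 := by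
      filter_upwards [enorm_ae_le_eLpNormEssSup (TinfPow α w n ⇑f) μ] with x hx
      refine hx.trans_lt ?_
      rwa [← eLpNorm_exponent_top]
    have hae2 : ∀ᵐ t ∂μ, (‖TinfPow α w n ⇑f ((⇑α.symm)^[n] t)‖₊ : ℝ≥0∞) < 1 := by
      rw [Filter.eventually_iff, mem_ae_iff] at hae ⊢
      exact null_pres_iter α hnorm n hae
    have hcomb := hgood.and hae2
    rw [Filter.eventually_iff, mem_ae_iff] at hcomb
    set S := {t | (t ∈ F → (1:ℝ)/β ≤ ‖⇑f t‖) ∧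
      (‖TinfPow α w n ⇑f ((⇑α.symm)^[n] t)‖₊ : ℝ≥0∞) < 1} with hS
    have hFS : μ (F ∩ S) ≠ 0 := by
      intro h0
      have hsub : F ⊆ (F ∩ S) ∪ Sᶜ := by
        intro x hx
        by_cases hxS : x ∈ S
        · exact Or.inl ⟨hx, hxS⟩
        · exact Or.inr hxS
      have := (measure_mono hsub).trans (measure_union_le (μ := μ) (F ∩ S) Sᶜ)
      rw [h0, hcomb] at this
      simp at this
      exact absurd this hF0.ne'
    obtain ⟨t, htF, htS⟩ := nonempty_of_measure_ne_zero hFS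
    obtain ⟨ht1, ht2⟩ := htS
    -- compute the value at `x = α.symm^[n] t`
    set x := (⇑α.symm)^[n] t with hx
    have hiter : ∀ k, k ≤ n → (⇑α)^[k] x = (⇑α.symm)^[n-k] t := by
      intro k hk
      have h := iter_cancel α k (n-k) t
      rw [show k + (n-k) = n by omega] at h
      rw [hx]
      exact h
    have hxn : (⇑α)^[n] x = t := by
      have := hiter n le_rfl
      simpa using this
    have hprod : (∏ k ∈ Finset.range n, (w ((⇑α)^[k] x) : ℂ)) =
        ((∏ j ∈ Finset.Icc 1 n, w ((⇑α.symm)^[j] t) : ℝ) : ℂ) := by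
      push_cast
      refine Finset.prod_nbij' (fun k => n - k) (fun j => n - j) ?_ ?_ ?_ ?_ ?_
      · intro a ha
        simp only [Finset.mem_range] at ha
        simp only [Finset.mem_Icc]
        omega
      · intro a ha
        simp only [Finset.mem_Icc] at ha
        simp only [Finset.mem_range]
        omega
      · intro a ha
        simp only [Finset.mem_range] at ha
        show n - (n - a) = a
        omega
      · intro a ha
        simp only [Finset.mem_Icc] at ha
        show n - (n - a) = a
        omega
      · intro a ha
        simp only [Finset.mem_range] at ha
        rw [hiter a (by omega)]
    have hPpos : 0 < ∏ j ∈ Finset.Icc 1 n, w ((⇑α.symm)^[j] t) :=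
      Finset.prod_pos fun j _ => hw0 _
    have hnormval : ‖TinfPow α w n ⇑f x‖ =
        (∏ j ∈ Finset.Icc 1 n, w ((⇑α.symm)^[j] t)) * ‖⇑f t‖ := by
      rw [TinfPow, norm_mul, hprod, hxn, Complex.norm_real, Real.norm_eq_abs,
        abs_of_pos hPpos]
    have hone : (1:ℝ) ≤ ‖TinfPow α w n ⇑f x‖ := by
      rw [hnormval]
      have h1 : β * (1/β) ≤ (∏ j ∈ Finset.Icc 1 n, w ((⇑α.symm)^[j] t)) * ‖⇑f t‖ :=
        mul_le_mul (hβle n t htF) (ht1 htF) (by positivity) (le_of_lt hPpos)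
      calc (1:ℝ) = β * (1/β) := by field_simp
      _ ≤ _ := h1
    have : (1:ℝ≥0∞) ≤ (‖TinfPow α w n ⇑f x‖₊ : ℝ≥0∞) := by
      rw [ENNReal.one_le_coe_iff]
      rw [← NNReal.coe_le_coe]
      simpa using hone
    exact absurd (this.trans_lt ht2) (by simp)
  -- The first set is contained in the second.
  have hAB : ∀ f : Lp ℂ ⊤ μ, (∀ n : ℕ, 1 ≤ eLpNorm (TinfPow α w n ⇑f) ⊤ μ) →
      ¬ Dense {g : Lp ℂ ⊤ μ | ∃ n : ℕ, ⇑g =ᵐ[μ] TinfPow α w n ⇑f} := by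
    intro f hf hdense
    obtain ⟨g, hgG, hgd⟩ := Metric.mem_closure_iff.1 (hdense (0 : Lp ℂ ⊤ μ))
      (1/2) (by norm_num)
    obtain ⟨n, hgn⟩ := hgG
    have h1 : (1:ℝ≥0∞) ≤ eLpNorm (⇑g) ⊤ μ := by
      rw [eLpNorm_congr_ae hgn]; exact hf n
    have h2 : (1:ℝ) ≤ ‖g‖ := by
      rw [Lp.norm_def]
      have := ENNReal.toReal_mono (Lp.eLpNorm_ne_top g) h1
      simpa using this
    rw [dist_comm, dist_zero_right] at hgd
    linarith
  -- A set containing the ball `B(f₀, 1)` is not `σ`-porous.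
  have hnot : ∀ E : Set (Lp ℂ ⊤ μ), Metric.ball f₀ 1 ⊆ E → ¬ SigmaPorous E := by
    intro E hsub hSP
    have hm : IsMeagre E := sigmaPorous_isMeagre hSP
    have hd : Dense Eᶜ := dense_of_mem_residual hm
    obtain ⟨g, hgE, hgb⟩ := hd.exists_mem_open Metric.isOpen_ball
      ⟨f₀, Metric.mem_ball_self one_pos⟩
    exact hgE (hsub hgb)
  constructor
  · exact hnot _ fun f hf => hmain f (Metric.mem_ball.1 hf)
  · exact hnot _ fun f hf => hAB f (hmain f (Metric.mem_ball.1 hf))
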